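/- For symmetric positive definite matrices X, Y, the determinant of the midpoint satisfies det((X+Y)/2) ≥ √(det X · det Y), with equality if and only if X = Y. -/

import Mathlib

open Matrix

noncomputable def matLog {n : ℕ} (A : Matrix (Fin n) (Fin n) ℝ) : Matrix (Fin n) (Fin n) ℝ :=
  open scoped Classical in
  if hA : A.IsHermitian then
    (hA.eigenvectorUnitary : Matrix (Fin n) (Fin n) ℝ) *
      Matrix.diagonal (fun i => Real.log (hA.eigenvalues i)) *
      star (hA.eigenvectorUnitary : Matrix (Fin n) (Fin n) ℝ)
  else 0

noncomputable def frob {n : ℕ} (A : Matrix (Fin n) (Fin n) ℝ) : ℝ :=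
  Real.sqrt (∑ i, ∑ j, (A i j) ^ 2)

noncomputable def invSqrt {n : ℕ} (A : Matrix (Fin n) (Fin n) ℝ) : Matrix (Fin n) (Fin n) ℝ :=
  open scoped Classical in
  if hA : A.PosDef then
    ((hA.1.eigenvectorUnitary : Matrix (Fin n) (Fin n) ℝ) *
      Matrix.diagonal (((↑) : ℝ → ℝ) ∘ (Real.sqrt ·) ∘ hA.1.eigenvalues) *
      (star hA.1.eigenvectorUnitary : Matrix (Fin n) (Fin n) ℝ))⁻¹
  else 0

/-- AIRM distance δ_r(X,Y) = ‖log (X^{-1/2} Y X^{-1/2})‖_F -/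
noncomputable def airm {n : ℕ} (X Y : Matrix (Fin n) (Fin n) ℝ) : ℝ :=
  frob (matLog (invSqrt X * Y * invSqrt X))

/-- Stein / JBLD divergence. -/
noncomputable def jbld {n : ℕ} (X Y : Matrix (Fin n) (Fin n) ℝ) : ℝ :=
  Real.log ((((1:ℝ)/2) • (X + Y)).det) - (1/2) * Real.log ((X * Y).det)

/-!
Write `X = Bᴴ B` with `B` invertible and `Y = Bᴴ M B`; then `M` is positive definite and both
sides of the inequality carry the factor `det X`, which reduces it to
`√(det M) ≤ det ((1 + M) / 2)`. Diagonalising `M`, this is the product over its eigenvalues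
`λ > 0` of the scalar AM–GM inequality `√λ ≤ (1 + λ) / 2`, which is strict unless `λ = 1`.
Hence equality forces `M = 1`, that is `X = Y`.
-/

namespace Real

lemma sqrt_le_one_add_div_two {a : ℝ} (ha : 0 ≤ a) : √a ≤ (1 + a) / 2 := by
  nlinarith [sq_sqrt ha, sq_nonneg (√a - 1)]

lemma sqrt_lt_one_add_div_two {a : ℝ} (ha : 0 ≤ a) (h : a ≠ 1) : √a < (1 + a) / 2 := by
  have hsqrt : √a ≠ 1 := fun h' => h (by rw [← sq_sqrt ha, h', one_pow])
  nlinarith [sq_sqrt ha, sq_pos_of_ne_zero (sub_ne_zero.mpr hsqrt)]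

end Real

namespace Matrix

section RCLike

variable {n 𝕜 : Type*} [Fintype n] [DecidableEq n] [RCLike 𝕜] {A : Matrix n n 𝕜}

lemma IsHermitian.det_cfc (hA : A.IsHermitian) (f : ℝ → ℝ) :
    (cfc f A).det = ∏ i, (f (hA.eigenvalues i) : 𝕜) := by
  rw [hA.cfc_eq]
  simp [IsHermitian.cfc, -Unitary.conjStarAlgAut_apply]

lemma IsHermitian.det_half_smul_one_add (hA : A.IsHermitian) :
    ((1 / 2 : ℝ) • (1 + A)).det = ∏ i, (((1 + hA.eigenvalues i) / 2 : ℝ) : 𝕜) := by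
  have hA' : IsSelfAdjoint A := hA
  have hcfc : (1 / 2 : ℝ) • (1 + A) = cfc (fun x : ℝ => (1 + x) / 2) A := by
    simp_rw [div_eq_inv_mul, mul_one]
    rw [cfc_const_mul _ (fun x : ℝ => 1 + x) A, cfc_const_add 1 (fun x : ℝ => x) A, cfc_id' ℝ A,
      map_one]
  rw [hcfc, hA.det_cfc]

lemma IsHermitian.eq_one_of_eigenvalues_eq_one (hA : A.IsHermitian)
    (h : ∀ i, hA.eigenvalues i = 1) : A = 1 := by
  calc A = cfc (fun x : ℝ => x) A := (cfc_id' ℝ A).symm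
    _ = cfc (fun _ : ℝ => 1) A := cfc_congr <| by
        rw [hA.spectrum_real_eq_range_eigenvalues]
        rintro _ ⟨i, rfl⟩
        exact h i
    _ = 1 := cfc_const_one ℝ A

end RCLike

variable {n R : Type*} [Fintype n] [DecidableEq n]

lemma det_mul_mul_eq_det_mul_mul_det [CommRing R] (A M B : Matrix n n R) :
    (A * M * B).det = (A * B).det * M.det := by
  rw [det_mul, det_mul, det_mul]
  ring

lemma det_smul_mul_add_mul_mul [CommRing R] (c : R) (A M B : Matrix n n R) :
    (c • (A * B + A * M * B)).det = (A * B).det * (c • (1 + M)).det := by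
  have hfactor : c • (A * B + A * M * B) = A * (c • (1 + M)) * B := by
    rw [Matrix.mul_smul, Matrix.smul_mul, Matrix.mul_add, Matrix.add_mul, Matrix.mul_one]
  rw [hfactor, det_mul_mul_eq_det_mul_mul_det]

open scoped MatrixOrder in
lemma PosDef.exists_eq_star_mul_self_and_star_mul_mul {X Y : Matrix n n ℝ} (hX : X.PosDef)
    (hY : Y.PosDef) :
    ∃ B M : Matrix n n ℝ, IsUnit B ∧ M.PosDef ∧ X = star B * B ∧ Y = star B * M * B := by
  obtain ⟨B, rfl⟩ := CStarAlgebra.nonneg_iff_eq_star_mul_self.mp hX.posSemidef.nonneg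
  have hdet : IsUnit B.det := by
    have hXdet := (isUnit_iff_isUnit_det _).mp hX.isUnit
    rw [det_mul] at hXdet
    exact isUnit_of_mul_isUnit_right hXdet
  have hB : IsUnit B := (isUnit_iff_isUnit_det B).mpr hdet
  have hinv : B⁻¹ * B = 1 := nonsing_inv_mul B hdet
  refine ⟨B, star B⁻¹ * Y * B⁻¹, hB, ?_, rfl, ?_⟩
  · exact (IsUnit.posDef_star_left_conjugate_iff (isUnit_nonsing_inv_iff.mpr hB)).mpr hY
  · rw [mul_assoc, mul_assoc, hinv, mul_one, ← mul_assoc, ← star_mul, hinv, star_one, one_mul]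

variable {M : Matrix n n ℝ}

lemma PosSemidef.sqrt_det (hM : M.PosSemidef) : √M.det = ∏ i, √(hM.1.eigenvalues i) := by
  rw [hM.1.det_eq_prod_eigenvalues]
  exact Real.sqrt_prod _ fun i _ => hM.eigenvalues_nonneg i

lemma PosDef.sqrt_det_le_det_half_smul_one_add (hM : M.PosDef) :
    √M.det ≤ ((1 / 2 : ℝ) • (1 + M)).det := by
  rw [hM.posSemidef.sqrt_det, hM.1.det_half_smul_one_add]
  exact Finset.prod_le_prod (fun i _ => Real.sqrt_nonneg _)
    fun i _ => Real.sqrt_le_one_add_div_two (hM.eigenvalues_pos i).le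

lemma PosDef.sqrt_det_lt_det_half_smul_one_add (hM : M.PosDef) (h : M ≠ 1) :
    √M.det < ((1 / 2 : ℝ) • (1 + M)).det := by
  obtain ⟨j, hj⟩ : ∃ j, hM.1.eigenvalues j ≠ 1 := by
    by_contra! hall
    exact h (hM.1.eq_one_of_eigenvalues_eq_one hall)
  rw [hM.posSemidef.sqrt_det, hM.1.det_half_smul_one_add]
  exact Finset.prod_lt_prod (fun i _ => Real.sqrt_pos.mpr (hM.eigenvalues_pos i))
    (fun i _ => Real.sqrt_le_one_add_div_two (hM.eigenvalues_pos i).le)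
    ⟨j, Finset.mem_univ j, Real.sqrt_lt_one_add_div_two (hM.eigenvalues_pos j).le hj⟩

lemma PosDef.det_half_smul_one_add_eq_sqrt_det_iff (hM : M.PosDef) :
    ((1 / 2 : ℝ) • (1 + M)).det = √M.det ↔ M = 1 := by
  refine ⟨fun h => ?_, ?_⟩
  · by_contra hne
    exact (hM.sqrt_det_lt_det_half_smul_one_add hne).ne' h
  · rintro rfl
    rw [← two_smul ℝ (1 : Matrix n n ℝ), smul_smul]
    norm_num

end Matrix

theorem det_midpoint_ge_geom_mean {D : ℕ} (X Y : Matrix (Fin D) (Fin D) ℝ)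
    (hX : X.PosDef) (hY : Y.PosDef) :
    Real.sqrt (X.det * Y.det) ≤ (((1:ℝ)/2) • (X + Y)).det ∧
      ((((1:ℝ)/2) • (X + Y)).det = Real.sqrt (X.det * Y.det) ↔ X = Y) := by
  obtain ⟨B, M, hB, hM, rfl, rfl⟩ := hX.exists_eq_star_mul_self_and_star_mul_mul hY
  have hdet : 0 < (star B * B).det := hX.det_pos
  have hsqrt : √((star B * B).det * (star B * M * B).det) = (star B * B).det * √M.det := by
    rw [det_mul_mul_eq_det_mul_mul_det, ← mul_assoc, Real.sqrt_mul (mul_self_nonneg _),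
      Real.sqrt_mul_self hdet.le]
  have hcancel : star B * B = star B * M * B ↔ M = 1 := by
    simpa [eq_comm] using (hB.mul_left_inj (b := star B * M) (c := star B * 1)).trans
      hB.star.mul_right_inj
  rw [det_smul_mul_add_mul_mul, hsqrt, mul_right_inj' hdet.ne',
    hM.det_half_smul_one_add_eq_sqrt_det_iff, hcancel]
  exact ⟨mul_le_mul_of_nonneg_left hM.sqrt_det_le_det_half_smul_one_add hdet.le, Iff.rfl⟩
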